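/- If f is an entire function that vanishes at every positive integer and satisfies |f(z)| ≤ e^{|z|} for all z and |f(iy)| ≤ e^{(π/2)|y|} for all real y, then f(1/2) = 0. -/

import Mathlib

open Complex Set Filter

lemma sin_norm_sq (z : ℂ) :
    ‖(Complex.sin z)‖ ^ 2 = Real.sin z.re ^ 2 + Real.sinh z.im ^ 2 := by
  have h : Complex.sin z = (Real.sin z.re * Real.cosh z.im : ℝ)
      + (Real.cos z.re * Real.sinh z.im : ℝ) * I := by
    conv_lhs => rw [← Complex.re_add_im z]
    rw [Complex.sin_add, Complex.cos_mul_I, Complex.sin_mul_I, ← Complex.ofReal_sin,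
      ← Complex.ofReal_cos, ← Complex.ofReal_sinh, ← Complex.ofReal_cosh]
    push_cast
    ring
  rw [h, ← Complex.normSq_eq_norm_sq, Complex.normSq_add_mul_I]
  have h1 := Real.sin_sq_add_cos_sq z.re
  have h2 := Real.cosh_sq z.im
  nlinarith [Real.sinh_sq z.im]

lemma sinh_le_sin_norm (z : ℂ) : |Real.sinh z.im| ≤ ‖(Complex.sin z)‖ := by
  have h := sin_norm_sq z
  nlinarith [norm_nonneg (Complex.sin z), abs_nonneg (Real.sinh z.im),
    _root_.sq_abs (Real.sinh z.im), sq_nonneg (Real.sin z.re)]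

lemma sin_re_le_sin_norm (z : ℂ) : |Real.sin z.re| ≤ ‖(Complex.sin z)‖ := by
  have h := sin_norm_sq z
  nlinarith [norm_nonneg (Complex.sin z), abs_nonneg (Real.sin z.re),
    _root_.sq_abs (Real.sin z.re), sq_nonneg (Real.sinh z.im)]

lemma sin_pi_int (m : ℤ) : Complex.sin (Real.pi * m) = 0 :=
  Complex.sin_eq_zero_iff.mpr ⟨m, by ring⟩

lemma eq_int_of_sin_pi_eq_zero {z : ℂ} (h : Complex.sin (Real.pi * z) = 0) :
    ∃ m : ℤ, z = m := by
  obtain ⟨k, hk⟩ := Complex.sin_eq_zero_iff.mp h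
  have hπ : (Real.pi : ℂ) ≠ 0 := Complex.ofReal_ne_zero.mpr Real.pi_ne_zero
  exact ⟨k, mul_left_cancel₀ hπ (by rw [hk]; ring)⟩

lemma round_eq_of_abs_sub_lt {x : ℝ} {m : ℤ} (h : |x - m| < 1/2) : round x = m := by
  have h1 : |x - round x| ≤ 1/2 := abs_sub_round x
  have h2 : |(round x : ℝ) - m| < 1 := by
    calc |(round x : ℝ) - m| ≤ |(round x : ℝ) - x| + |x - m| := abs_sub_le _ _ _
      _ < 1 := by rw [abs_sub_comm]; linarith
  have h3 : |((round x - m : ℤ) : ℝ)| < 1 := by push_cast; exact h2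
  rw [← Int.cast_abs] at h3
  have h4 : |round x - m| < 1 := by exact_mod_cast h3
  have h5 := abs_lt.mp h4
  omega

lemma one_le_round_of_half_le {x : ℝ} (h : 1/2 ≤ x) : 1 ≤ round x := by
  rw [round_eq]
  exact Int.le_floor.mpr (by push_cast; linarith)

lemma sin_lower_near_int (m : ℤ) (u : ℂ) (hre : |u.re| ≤ 1/2) :
    2 * ‖u‖ ≤ ‖(Complex.sin (Real.pi * ((m : ℂ) + u)))‖ := by
  set z : ℂ := (m : ℂ) + u with hz
  have hzre : z.re = m + u.re := by simp [hz]
  have hzim : z.im = u.im := by simp [hz]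
  have hre' : ((Real.pi : ℂ) * z).re = Real.pi * (m + u.re) := by
    rw [Complex.re_ofReal_mul, hzre]
  have him' : ((Real.pi : ℂ) * z).im = Real.pi * u.im := by
    rw [Complex.im_ofReal_mul, hzim]
  have key := sin_norm_sq ((Real.pi : ℂ) * z)
  rw [hre', him'] at key
  have hper : Real.sin (Real.pi * (m + u.re)) ^ 2 = Real.sin (Real.pi * u.re) ^ 2 := by
    have heq : Real.pi * (m + u.re) = Real.pi * u.re + m * Real.pi := by ring
    rw [heq, Real.sin_add_int_mul_pi]
    rcases Int.even_or_odd m with he | ho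
    · rw [he.neg_one_zpow]; ring
    · rw [Odd.neg_one_zpow ho]; ring
  have hsin : 2 * |u.re| ≤ |Real.sin (Real.pi * u.re)| := by
    have h0 : |Real.sin (Real.pi * u.re)| = Real.sin (Real.pi * |u.re|) := by
      rcases le_or_gt 0 u.re with h | h
      · rw [_root_.abs_of_nonneg h]
        exact _root_.abs_of_nonneg (Real.sin_nonneg_of_nonneg_of_le_pi (by positivity)
          (by nlinarith [Real.pi_pos, _root_.abs_of_nonneg h, hre]))
      · have hn : 0 ≤ Real.sin (Real.pi * (-u.re)) :=
          Real.sin_nonneg_of_nonneg_of_le_pi (by nlinarith [Real.pi_pos])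
            (by nlinarith [Real.pi_pos, _root_.abs_of_neg h, hre])
        have hs : Real.sin (Real.pi * u.re) = -Real.sin (Real.pi * (-u.re)) := by
          rw [← Real.sin_neg]
          ring_nf
        rw [_root_.abs_of_neg h, _root_.abs_of_nonpos (by linarith), hs, mul_neg, neg_neg]
    rw [h0]
    have hms := Real.mul_le_sin (x := Real.pi * |u.re|) (by positivity)
      (by nlinarith [Real.pi_pos])
    have heq : 2 / Real.pi * (Real.pi * |u.re|) = 2 * |u.re| := by
      field_simp
    linarith [heq ▸ hms]
  have hsinh : 2 * |u.im| ≤ |Real.sinh (Real.pi * u.im)| := by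
    have h0 : |Real.sinh (Real.pi * u.im)| = Real.sinh (Real.pi * |u.im|) := by
      rw [Real.abs_sinh, abs_mul, _root_.abs_of_nonneg Real.pi_pos.le]
    rw [h0]
    have h1 : Real.pi * |u.im| ≤ Real.sinh (Real.pi * |u.im|) :=
      Real.self_le_sinh_iff.mpr (by positivity)
    nlinarith [Real.pi_gt_three, abs_nonneg u.im]
  have habs : (‖u‖) ^ 2 = u.re ^ 2 + u.im ^ 2 := by
    rw [← Complex.normSq_eq_norm_sq, Complex.normSq_apply]; ring
  nlinarith [norm_nonneg (Complex.sin ((Real.pi : ℂ) * z)), norm_nonneg u,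
    _root_.sq_abs u.re, _root_.sq_abs u.im, _root_.sq_abs (Real.sin (Real.pi * u.re)),
    _root_.sq_abs (Real.sinh (Real.pi * u.im)), abs_nonneg u.re, abs_nonneg u.im]

lemma ball_eq_abs (c : ℂ) (r : ℝ) : Metric.ball c r = {w : ℂ | ‖(w - c)‖ < r} := by
  ext w
  simp [Metric.mem_ball, Complex.dist_eq]

open scoped Classical in
noncomputable def carlsonF (f : ℂ → ℂ) (z : ℂ) : ℂ :=
  if 1 ≤ round z.re ∧ ‖(z - (round z.re : ℤ))‖ < 1/2
  then dslope f ((round z.re : ℤ) : ℂ) z /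
    dslope (fun w => Complex.sin (Real.pi * w)) ((round z.re : ℤ) : ℂ) z
  else f z / Complex.sin (Real.pi * z)

lemma carlsonF_eq (f : ℂ → ℂ) (hzero : ∀ m : ℤ, 1 ≤ m → f m = 0) {z : ℂ}
    (hs : Complex.sin (Real.pi * z) ≠ 0) :
    carlsonF f z = f z / Complex.sin (Real.pi * z) := by
  unfold carlsonF
  split_ifs with h
  · obtain ⟨h1, h2⟩ := h
    have hzm : z ≠ ((round z.re : ℤ) : ℂ) := by
      intro hzm
      rw [hzm] at hs
      exact hs (sin_pi_int _)
    have hne : z - ((round z.re : ℤ) : ℂ) ≠ 0 := sub_ne_zero.mpr hzm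
    rw [dslope_of_ne _ hzm, dslope_of_ne _ hzm, slope_def_field, slope_def_field,
      hzero _ h1, sin_pi_int _, sub_zero, sub_zero]
    exact div_div_div_cancel_right₀ hne _ _
  · rfl

lemma deriv_sinpi_ne_zero (m : ℤ) :
    dslope (fun w => Complex.sin (Real.pi * w)) ((m : ℤ) : ℂ) ((m : ℤ) : ℂ) ≠ 0 := by
  rw [dslope_same]
  have hd : HasDerivAt (fun w => Complex.sin (Real.pi * w))
      (Complex.cos (Real.pi * m) * Real.pi) (m : ℂ) := by
    simpa [Function.comp_def] using (Complex.hasDerivAt_sin ((Real.pi : ℂ) * m)).comp (m : ℂ)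
      ((hasDerivAt_id ((m : ℤ) : ℂ)).const_mul (Real.pi : ℂ))
  rw [hd.deriv]
  have hcos : Complex.cos (Real.pi * m) ≠ 0 := by
    intro h
    have h2 := Complex.sin_sq_add_cos_sq (Real.pi * m)
    rw [sin_pi_int m, h] at h2
    simp at h2
  exact mul_ne_zero hcos (Complex.ofReal_ne_zero.mpr Real.pi_ne_zero)

lemma sin_pi_ne_zero_of_near {w : ℂ} {m : ℤ} (hm : 1 ≤ m) (hw : ‖(w - m)‖ < 1/2)
    (hwm : w ≠ (m : ℂ)) : Complex.sin (Real.pi * w) ≠ 0 := by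
  intro h
  obtain ⟨k, rfl⟩ := eq_int_of_sin_pi_eq_zero h
  have hkm : k ≠ m := fun h2 => hwm (by rw [h2])
  have hcast : ((k : ℂ) - m) = ((k - m : ℤ) : ℂ) := by push_cast; ring
  rw [hcast, Complex.norm_intCast] at hw
  rw [← Int.cast_abs] at hw
  have h3 : ((|k - m| : ℤ) : ℝ) < 1 := hw.trans (by norm_num)
  have h4 : |k - m| < 1 := by exact_mod_cast h3
  have h5 := abs_lt.mp h4
  omega

lemma round_eq_of_near {w : ℂ} {m : ℤ} (hw : ‖(w - m)‖ < 1/2) : round w.re = m := by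
  apply round_eq_of_abs_sub_lt
  calc |w.re - (m : ℝ)| = |(w - m).re| := by simp
    _ ≤ ‖(w - m)‖ := Complex.abs_re_le_norm _
    _ < 1/2 := hw

lemma carlsonF_differentiableAt (f : ℂ → ℂ) (hf : Differentiable ℂ f)
    (hzero : ∀ m : ℤ, 1 ≤ m → f m = 0) {z₀ : ℂ} (h0 : 0 < z₀.re) :
    DifferentiableAt ℂ (carlsonF f) z₀ := by
  have hgd : Differentiable ℂ (fun w => Complex.sin (Real.pi * w)) :=
    Complex.differentiable_sin.comp (differentiable_id.const_mul (Real.pi : ℂ))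
  by_cases hc : ∃ m : ℤ, 1 ≤ m ∧ ‖(z₀ - m)‖ < 1/2
  · obtain ⟨m, hm1, hm2⟩ := hc
    have hloc : ∀ w : ℂ, ‖(w - m)‖ < 1/2 → carlsonF f w =
        dslope f (m : ℂ) w / dslope (fun w => Complex.sin (Real.pi * w)) (m : ℂ) w := by
      intro w hw
      unfold carlsonF
      rw [round_eq_of_near hw]
      rw [if_pos ⟨hm1, hw⟩]
    have hev : carlsonF f =ᶠ[nhds z₀] (fun w =>
        dslope f (m : ℂ) w / dslope (fun w => Complex.sin (Real.pi * w)) (m : ℂ) w) := by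
      have hopen : IsOpen {w : ℂ | ‖(w - (m:ℂ))‖ < 1/2} := by
        rw [← ball_eq_abs]; exact Metric.isOpen_ball
      filter_upwards [hopen.mem_nhds hm2] with w hw using hloc w hw
    rw [hev.differentiableAt_iff]
    have hnum : DifferentiableAt ℂ (dslope f (m : ℂ)) z₀ := by
      rcases eq_or_ne z₀ ((m : ℤ) : ℂ) with rfl | hne
      · obtain ⟨p, hp⟩ := hf.analyticAt ((m : ℤ) : ℂ)
        exact hp.has_fpower_series_dslope_fslope.analyticAt.differentiableAt
      · exact (differentiableAt_dslope_of_ne hne).mpr (hf z₀)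
    have hden : DifferentiableAt ℂ
        (dslope (fun w => Complex.sin (Real.pi * w)) (m : ℂ)) z₀ := by
      rcases eq_or_ne z₀ ((m : ℤ) : ℂ) with rfl | hne
      · obtain ⟨p, hp⟩ := hgd.analyticAt ((m : ℤ) : ℂ)
        exact hp.has_fpower_series_dslope_fslope.analyticAt.differentiableAt
      · exact (differentiableAt_dslope_of_ne hne).mpr (hgd z₀)
    have hden0 : dslope (fun w => Complex.sin (Real.pi * w)) (m : ℂ) z₀ ≠ 0 := by
      rcases eq_or_ne z₀ ((m : ℤ) : ℂ) with rfl | hne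
      · exact deriv_sinpi_ne_zero m
      · rw [dslope_of_ne _ hne, slope_def_field]
        show (Complex.sin (Real.pi * z₀) - Complex.sin (Real.pi * m)) / (z₀ - (m:ℂ)) ≠ 0
        rw [sin_pi_int m, sub_zero]
        exact div_ne_zero (sin_pi_ne_zero_of_near hm1 hm2 hne) (sub_ne_zero.mpr hne)
    exact hnum.div hden hden0
  · push_neg at hc
    have hrpos : 0 < min (1/4) (z₀.re / 2) := lt_min (by norm_num) (by linarith)
    have hsne : ∀ w : ℂ, ‖(w - z₀)‖ < min (1/4) (z₀.re / 2) →
        Complex.sin (Real.pi * w) ≠ 0 := by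
      intro w hw hzero'
      obtain ⟨k, rfl⟩ := eq_int_of_sin_pi_eq_zero hzero'
      rcases le_or_gt 1 k with hk | hk
      · have h1 := hc k hk
        have h2 : ‖(z₀ - k)‖ < 1/2 := by
          rw [← neg_sub, norm_neg] at hw
          exact hw.trans_le ((min_le_left _ _).trans (by norm_num))
        linarith
      · have hk0 : (k : ℝ) ≤ 0 := by exact_mod_cast (by omega : k ≤ 0)
        have habsre : |((k:ℂ) - z₀).re| ≤ ‖((k:ℂ) - z₀)‖ := Complex.abs_re_le_norm _
        have hre2 : ((k:ℂ) - z₀).re = (k:ℝ) - z₀.re := by simp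
        have h3 : z₀.re ≤ |((k:ℂ) - z₀).re| := by
          rw [hre2, abs_of_nonpos (by linarith)]
          linarith
        have h4 := hw.trans_le (min_le_right _ _)
        linarith
    have hev : carlsonF f =ᶠ[nhds z₀]
        (fun w => f w / Complex.sin (Real.pi * w)) := by
      have hopen : IsOpen {w : ℂ | ‖(w - z₀)‖ < min (1/4) (z₀.re / 2)} := by
        rw [← ball_eq_abs]; exact Metric.isOpen_ball
      have hz₀mem : z₀ ∈ {w : ℂ | ‖(w - z₀)‖ < min (1/4) (z₀.re / 2)} := by
        simp only [Set.mem_setOf_eq, sub_self, norm_zero]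
        exact hrpos
      filter_upwards [hopen.mem_nhds hz₀mem] with w hw using
        carlsonF_eq f hzero (hsne w hw)
    rw [hev.differentiableAt_iff]
    exact (hf z₀).div (hgd z₀) (hsne z₀ (by simpa using hrpos))

lemma carlsonF_bound_away (f : ℂ → ℂ) (hzero : ∀ m : ℤ, 1 ≤ m → f m = 0)
    (hgrowth : ∀ z : ℂ, ‖f z‖ ≤ Real.exp ‖z‖) {z : ℂ} (hre : 1/2 ≤ z.re)
    (haway : 1/4 ≤ ‖(z - (round z.re : ℤ))‖) :
    ‖carlsonF f z‖ ≤ 2 * Real.exp ‖z‖ := by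
  have hmre : |(z - (round z.re : ℤ)).re| ≤ 1/2 := by
    have := abs_sub_round z.re
    simpa using this
  have hlow := sin_lower_near_int (round z.re) (z - (round z.re : ℤ)) hmre
  have hz : ((round z.re : ℤ) : ℂ) + (z - (round z.re : ℤ)) = z := by ring
  rw [hz] at hlow
  have hpos : (1:ℝ)/2 ≤ ‖(Complex.sin (Real.pi * z))‖ := by linarith
  have hne : Complex.sin (Real.pi * z) ≠ 0 := by
    intro h
    rw [h] at hpos
    simp at hpos
    linarith
  rw [carlsonF_eq f hzero hne]
  rw [norm_div]
  rw [div_le_iff₀ (by positivity : (0:ℝ) < ‖Complex.sin (Real.pi * z)‖)]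
  have h1 : ‖f z‖ ≤ Real.exp ‖z‖ := hgrowth z
  have h2 : (1:ℝ)/2 ≤ ‖Complex.sin (Real.pi * z)‖ := by
    assumption
  nlinarith [Real.exp_pos ‖z‖, norm_nonneg (f z)]

lemma carlsonF_growth (f : ℂ → ℂ) (hf : Differentiable ℂ f)
    (hzero : ∀ m : ℤ, 1 ≤ m → f m = 0)
    (hgrowth : ∀ z : ℂ, ‖f z‖ ≤ Real.exp ‖z‖) {z : ℂ} (hre : 1/2 ≤ z.re) :
    ‖carlsonF f z‖ ≤ 2 * Real.exp (‖z‖ + 1) := by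
  rcases le_or_gt (1/4) (‖(z - (round z.re : ℤ))‖) with haway | hnear
  · calc ‖carlsonF f z‖ ≤ 2 * Real.exp ‖z‖ := carlsonF_bound_away f hzero hgrowth hre haway
      _ ≤ 2 * Real.exp (‖z‖ + 1) := by
        have := Real.exp_le_exp.mpr (by linarith : ‖z‖ ≤ ‖z‖ + 1)
        linarith
  · set m : ℤ := round z.re with hm
    have hm1 : 1 ≤ m := one_le_round_of_half_le hre
    have hball : ∀ w : ℂ, w ∈ Metric.closedBall ((m:ℤ):ℂ) (1/4) → (3:ℝ)/4 ≤ w.re := by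
      intro w hw
      rw [Metric.mem_closedBall, Complex.dist_eq] at hw
      have h1 : |(w - (m:ℂ)).re| ≤ 1/4 := (Complex.abs_re_le_norm _).trans hw
      have h2 : (w - (m:ℂ)).re = w.re - (m:ℝ) := by simp
      rw [h2, abs_le] at h1
      have : (1:ℝ) ≤ (m:ℝ) := by exact_mod_cast hm1
      linarith
    have hd : DiffContOnCl ℂ (carlsonF f) (Metric.ball ((m:ℤ):ℂ) (1/4)) := by
      constructor
      · intro w hw
        exact (carlsonF_differentiableAt f hf hzero
          (by linarith [hball w (Metric.ball_subset_closedBall hw)])).differentiableWithinAt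
      · rw [closure_ball _ (by norm_num : (1:ℝ)/4 ≠ 0)]
        intro w hw
        exact (carlsonF_differentiableAt f hf hzero
          (by linarith [hball w hw])).continuousAt.continuousWithinAt
    have hfr : ∀ w ∈ frontier (Metric.ball ((m:ℤ):ℂ) (1/4)),
        ‖carlsonF f w‖ ≤ 2 * Real.exp (‖z‖ + 1) := by
      intro w hw
      rw [frontier_ball _ (by norm_num : (1:ℝ)/4 ≠ 0)] at hw
      rw [Metric.mem_sphere, Complex.dist_eq] at hw
      have hw4 : ‖(w - (m:ℂ))‖ = 1/4 := hw
      have hwre : 1/2 ≤ w.re := by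
        have := hball w (Metric.closedBall_subset_closedBall (le_refl _)
          (Metric.mem_closedBall.mpr (by rw [Complex.dist_eq, hw4])))
        linarith
      have hround : round w.re = m := round_eq_of_near (by rw [hw4]; norm_num)
      have haway : 1/4 ≤ ‖(w - (round w.re : ℤ))‖ := by rw [hround, hw4]
      have hb := carlsonF_bound_away f hzero hgrowth hwre haway
      have hnorm : ‖w‖ ≤ ‖z‖ + 1 := by
        have h1 : ‖(w - z)‖ ≤ ‖(w - (m:ℂ))‖ + ‖((m:ℂ) - z)‖ := by
          calc ‖(w - z)‖ = ‖((w - (m:ℂ)) + ((m:ℂ) - z))‖ := by ring_nf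
            _ ≤ _ := norm_add_le _ _
        have h2 : ‖((m:ℂ) - z)‖ < 1/4 := by
          rw [← neg_sub, norm_neg]
          exact hnear
        have h3 : ‖w‖ ≤ ‖z‖ + ‖(w - z)‖ := by
          calc ‖w‖ = ‖(z + (w - z))‖ := by ring_nf
            _ ≤ ‖z‖ + ‖(w - z)‖ := norm_add_le _ _
            _ = ‖z‖ + ‖(w - z)‖ := rfl
        rw [hw4] at h1
        linarith
      calc ‖carlsonF f w‖ ≤ 2 * Real.exp ‖w‖ := hb
        _ ≤ 2 * Real.exp (‖z‖ + 1) := by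
          have := Real.exp_le_exp.mpr hnorm
          linarith
    have hzcl : z ∈ closure (Metric.ball ((m:ℤ):ℂ) (1/4)) := by
      rw [closure_ball _ (by norm_num : (1:ℝ)/4 ≠ 0), Metric.mem_closedBall, Complex.dist_eq]
      exact hnear.le
    exact Complex.norm_le_of_forall_mem_frontier_norm_le Metric.isBounded_ball hd hfr hzcl

lemma mult_exp_bigO (h : ℂ → ℂ) (hgrowth : ∀ z : ℂ, ‖h z‖ ≤ Real.exp ‖z‖) (c : ℂ)
    (S : Set ℂ) :
    ∃ c' < (2:ℝ), ∃ B, (fun w => h w * Complex.exp (c * w)) =O[Bornology.cobounded ℂ ⊓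
      Filter.principal S] fun w => Real.exp (B * ‖w‖ ^ c') := by
  refine ⟨1, one_lt_two, 1 + ‖c‖, Asymptotics.IsBigO.of_bound 1 ?_⟩
  filter_upwards with w
  rw [one_mul, norm_mul, Complex.norm_exp,
    Real.norm_eq_abs, Real.abs_exp, Real.rpow_one]
  have h1 : ‖h w‖ ≤ Real.exp ‖w‖ := hgrowth w
  have h2 : (c * w).re ≤ ‖c‖ * ‖w‖ := by
    calc (c * w).re ≤ |(c * w).re| := le_abs_self _
      _ ≤ ‖(c * w)‖ := Complex.abs_re_le_norm _
      _ = ‖c‖ * ‖w‖ := norm_mul _ _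
  calc ‖h w‖ * Real.exp (c * w).re ≤ Real.exp ‖w‖ * Real.exp (‖c‖ * ‖w‖) := by
        apply mul_le_mul h1 (Real.exp_le_exp.mpr h2) (Real.exp_pos _).le (Real.exp_pos _).le
    _ = Real.exp (‖w‖ + ‖c‖ * ‖w‖) := (Real.exp_add _ _).symm
    _ ≤ Real.exp ((1 + ‖c‖) * ‖w‖) := by
        rw [Real.exp_le_exp]
        ring_nf
        exact le_refl _

set_option maxHeartbeats 1000000 in
lemma quad_bound (f : ℂ → ℂ) (hf : Differentiable ℂ f)
    (hgrowth : ∀ z : ℂ, ‖f z‖ ≤ Real.exp ‖z‖)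
    (hgrowth_im : ∀ y : ℝ, ‖f (Complex.I * y)‖ ≤ Real.exp ((Real.pi / 2) * |y|))
    (b Cr : ℝ) (hCr : 1 ≤ Cr)
    (hre : ∀ x : ℝ, 0 ≤ x → ‖f x‖ ≤ Cr * Real.exp (-b * x)) :
    ∀ z : ℂ, 0 ≤ z.re → ‖f z‖ ≤ Cr * Real.exp (-b * z.re + (Real.pi/2) * |z.im|) := by
  have key : ∀ c : ℂ, c.re = b → (c.im = Real.pi/2 ∨ c.im = -(Real.pi/2)) →
      ∀ w : ℂ, ‖f w * Complex.exp (c * w)‖ = ‖f w‖ * Real.exp (b * w.re - c.im * w.im) := by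
    intro c hcre _ w
    rw [norm_mul, Complex.norm_exp, Complex.mul_re, hcre]
  intro z hz
  rcases le_total 0 z.im with him | him
  · -- quadrant I
    have hcre : ((b : ℂ) + (Real.pi/2) * Complex.I).re = b := by simp
    have hcim : ((b : ℂ) + (Real.pi/2) * Complex.I).im = Real.pi/2 := by simp
    have hgnorm := fun w => by
      have h := key ((b : ℂ) + (Real.pi/2) * Complex.I) hcre (Or.inl hcim) w
      rwa [hcim] at h
    have hgle : ‖f z * Complex.exp (((b : ℂ) + (Real.pi/2) * Complex.I) * z)‖ ≤ Cr := by
      apply PhragmenLindelof.quadrant_I (C := Cr)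
        ((hf.mul ((differentiable_id.const_mul _).cexp)).diffContOnCl)
        (mult_exp_bigO f hgrowth _ _) ?_ ?_ hz him
      · intro x hx
        simp only [Pi.mul_apply]
        rw [hgnorm]
        simp only [Complex.ofReal_re, Complex.ofReal_im, mul_zero, sub_zero]
        calc ‖f x‖ * Real.exp (b * x) ≤ (Cr * Real.exp (-b * x)) * Real.exp (b * x) :=
              mul_le_mul_of_nonneg_right (hre x hx) (Real.exp_pos _).le
          _ = Cr := by rw [mul_assoc, ← Real.exp_add]; ring_nf; simp
      · intro x hx
        simp only [Pi.mul_apply]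
        rw [hgnorm]
        have hre0 : ((x:ℂ) * Complex.I).re = 0 := by simp
        have him0 : ((x:ℂ) * Complex.I).im = x := by simp
        rw [hre0, him0, mul_zero, zero_sub]
        have h1 : ‖f ((x:ℂ) * Complex.I)‖ ≤ Real.exp ((Real.pi/2) * x) := by
          have h2 := hgrowth_im x
          rw [mul_comm] at h2
          rwa [_root_.abs_of_nonneg hx] at h2
        calc ‖f ((x:ℂ)*Complex.I)‖ * Real.exp (-((Real.pi/2) * x))
            ≤ Real.exp ((Real.pi/2) * x) * Real.exp (-((Real.pi/2) * x)) :=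
              mul_le_mul_of_nonneg_right h1 (Real.exp_pos _).le
          _ = 1 := by rw [← Real.exp_add]; simp
          _ ≤ Cr := hCr
    rw [hgnorm] at hgle
    rw [_root_.abs_of_nonneg him]
    calc ‖f z‖ = (‖f z‖ * Real.exp (b * z.re - (Real.pi/2) * z.im)) *
          Real.exp (-b * z.re + (Real.pi/2) * z.im) := by
          rw [mul_assoc, ← Real.exp_add]
          ring_nf
          simp
      _ ≤ Cr * Real.exp (-b * z.re + (Real.pi/2) * z.im) :=
          mul_le_mul_of_nonneg_right hgle (Real.exp_pos _).le
  · -- quadrant IV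
    have hcre : ((b : ℂ) - (Real.pi/2) * Complex.I).re = b := by simp
    have hcim : ((b : ℂ) - (Real.pi/2) * Complex.I).im = -(Real.pi/2) := by simp
    have hgnorm := fun w => by
      have h := key ((b : ℂ) - (Real.pi/2) * Complex.I) hcre (Or.inr hcim) w
      rwa [hcim] at h
    have hgle : ‖f z * Complex.exp (((b : ℂ) - (Real.pi/2) * Complex.I) * z)‖ ≤ Cr := by
      apply PhragmenLindelof.quadrant_IV (C := Cr)
        ((hf.mul ((differentiable_id.const_mul _).cexp)).diffContOnCl)
        (mult_exp_bigO f hgrowth _ _) ?_ ?_ hz him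
      · intro x hx
        simp only [Pi.mul_apply]
        rw [hgnorm]
        simp only [Complex.ofReal_re, Complex.ofReal_im, mul_zero, sub_zero]
        calc ‖f x‖ * Real.exp (b * x) ≤ (Cr * Real.exp (-b * x)) * Real.exp (b * x) :=
              mul_le_mul_of_nonneg_right (hre x hx) (Real.exp_pos _).le
          _ = Cr := by rw [mul_assoc, ← Real.exp_add]; ring_nf; simp
      · intro x hx
        simp only [Pi.mul_apply]
        rw [hgnorm]
        have hre0 : ((x:ℂ) * Complex.I).re = 0 := by simp
        have him0 : ((x:ℂ) * Complex.I).im = x := by simp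
        rw [hre0, him0, mul_zero]
        have h1 : ‖f ((x:ℂ) * Complex.I)‖ ≤ Real.exp (-((Real.pi/2) * x)) := by
          have h2 := hgrowth_im x
          rw [mul_comm] at h2
          rwa [_root_.abs_of_nonpos hx, mul_neg] at h2
        calc ‖f ((x:ℂ)*Complex.I)‖ * Real.exp (0 - -(Real.pi/2) * x)
            = ‖f ((x:ℂ)*Complex.I)‖ * Real.exp ((Real.pi/2) * x) := by ring_nf
          _ ≤ Real.exp (-((Real.pi/2) * x)) * Real.exp ((Real.pi/2) * x) :=
              mul_le_mul_of_nonneg_right h1 (Real.exp_pos _).le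
          _ = 1 := by rw [← Real.exp_add]; simp
          _ ≤ Cr := hCr
    rw [hgnorm] at hgle
    rw [_root_.abs_of_nonpos him]
    calc ‖f z‖ = (‖f z‖ * Real.exp (b * z.re - -(Real.pi/2) * z.im)) *
          Real.exp (-b * z.re + (Real.pi/2) * -z.im) := by
          rw [mul_assoc, ← Real.exp_add]
          ring_nf
          simp
      _ ≤ Cr * Real.exp (-b * z.re + (Real.pi/2) * -z.im) :=
          mul_le_mul_of_nonneg_right hgle (Real.exp_pos _).le

lemma ray_sin_lower {z : ℂ} {s : ℝ} (hs : 0 ≤ s) (hre : z.re = 1/2 + s) (him : |z.im| = s) :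
    Real.exp (Real.pi * s) ≤ 4 * ‖(Complex.sin ((Real.pi : ℂ) * z))‖ := by
  have hzre : ((Real.pi : ℂ) * z).re = Real.pi * z.re := Complex.re_ofReal_mul _ _
  have hzim : ((Real.pi : ℂ) * z).im = Real.pi * z.im := Complex.im_ofReal_mul _ _
  rcases le_or_gt (1/4) s with hs4 | hs4
  · -- use sinh
    have h1 := sinh_le_sin_norm ((Real.pi : ℂ) * z)
    rw [hzim] at h1
    have h2 : |Real.sinh (Real.pi * z.im)| = Real.sinh (Real.pi * s) := by
      rw [Real.abs_sinh, abs_mul, _root_.abs_of_nonneg Real.pi_pos.le, him]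
    rw [h2] at h1
    have h3 : Real.exp (Real.pi * s) ≤ 4 * Real.sinh (Real.pi * s) := by
      rw [Real.sinh_eq]
      have h4 : (2:ℝ) ≤ Real.exp (2 * (Real.pi * s)) := by
        have h5 : (1:ℝ) ≤ 2 * (Real.pi * s) := by nlinarith [Real.pi_gt_three]
        have := Real.add_one_le_exp (2 * (Real.pi * s))
        linarith
      have hmul : Real.exp (Real.pi * s) * Real.exp (Real.pi * s) =
          Real.exp (2 * (Real.pi * s)) := by
        rw [← Real.exp_add]; ring_nf
      have hinv : Real.exp (-(Real.pi * s)) * Real.exp (Real.pi * s) = 1 := by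
        rw [← Real.exp_add]; simp
      have h7 := Real.exp_pos (Real.pi * s)
      have h8 := Real.exp_pos (-(Real.pi * s))
      nlinarith
    linarith
  · -- use sin of real part
    have h1 := sin_re_le_sin_norm ((Real.pi : ℂ) * z)
    rw [hzre, hre] at h1
    have h2 : Real.sin (Real.pi * (1/2 + s)) = Real.cos (Real.pi * s) := by
      have : Real.pi * (1/2 + s) = Real.pi * s + Real.pi / 2 := by ring
      rw [this, Real.sin_add_pi_div_two]
    have h3 : Real.cos (Real.pi / 4) ≤ Real.cos (Real.pi * s) := by
      apply Real.cos_le_cos_of_nonneg_of_le_pi (by positivity) (by nlinarith [Real.pi_pos])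
      nlinarith [Real.pi_pos]
    rw [Real.cos_pi_div_four] at h3
    have h4 : Real.sqrt 2 / 2 ≤ |Real.sin (Real.pi * (1/2 + s))| := by
      rw [h2]
      exact h3.trans (le_abs_self _)
    have h5 : Real.exp (Real.pi * s) ≤ Real.exp 1 := by
      apply Real.exp_le_exp.mpr
      nlinarith [Real.pi_lt_d2]
    have h6 : Real.exp 1 < 2.7182818286 := Real.exp_one_lt_d9
    have h7 : Real.sqrt 2 ^ 2 = 2 := Real.sq_sqrt (by norm_num)
    have h8 : (0:ℝ) ≤ Real.sqrt 2 := Real.sqrt_nonneg 2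
    nlinarith

set_option maxHeartbeats 1000000 in
lemma sector_step (f : ℂ → ℂ) (hf : Differentiable ℂ f)
    (hzero : ∀ m : ℤ, 1 ≤ m → f m = 0)
    (hgrowth : ∀ z : ℂ, ‖f z‖ ≤ Real.exp ‖z‖)
    (a C : ℝ) (hC : 0 < C)
    (H : ∀ z : ℂ, 0 ≤ z.re → ‖f z‖ ≤ C * Real.exp (-a * z.re + (Real.pi/2) * |z.im|)) :
    ∀ x : ℝ, 1/2 ≤ x → ‖f x‖ ≤ 4 * C * Real.exp (1/2) * Real.exp (-(a+1) * x) := by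
  have ht2 : (Real.sqrt 2 / 2)^2 = 1/2 := by
    rw [div_pow, Real.sq_sqrt] <;> norm_num
  set t : ℝ := Real.sqrt 2 / 2 with ht
  have htpos : 0 < t := by rw [ht]; positivity
  set c : ℂ := (t : ℂ) - (t:ℂ) * Complex.I with hcdef
  have hccre : c.re = t := by rw [hcdef]; simp
  have hccim : c.im = -t := by rw [hcdef]; simp
  have hcre : ∀ w : ℂ, (c * w).re = t * (w.re + w.im) := by
    intro w
    rw [Complex.mul_re, hccre, hccim]
    ring
  have hcim : ∀ w : ℂ, (c * w).im = t * (w.im - w.re) := by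
    intro w
    rw [Complex.mul_im, hccre, hccim]
    ring
  have hcabs : ‖c‖ = 1 := by
    have h1 : Complex.normSq c = 1 := by
      rw [Complex.normSq_apply, hccre, hccim]
      nlinarith
    rw [Complex.norm_def, h1, Real.sqrt_one]
  set Φ : ℂ → ℂ := fun w => carlsonF f (1/2 + c*w) * Complex.exp (((a+1 : ℝ) : ℂ) * (c*w))
    with hΦdef
  have hzre : ∀ w : ℂ, ((1:ℂ)/2 + c*w).re = 1/2 + t * (w.re + w.im) := by
    intro w
    rw [Complex.add_re, hcre]
    norm_num
  have hzim : ∀ w : ℂ, ((1:ℂ)/2 + c*w).im = t * (w.im - w.re) := by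
    intro w
    rw [Complex.add_im, hcim]
    norm_num
  -- the boundary-ray estimate
  have hray : ∀ w : ℂ, 0 ≤ (c*w).re → |(c*w).im| = (c*w).re →
      ‖Φ w‖ ≤ 4 * C * Real.exp (-a/2) := by
    intro w hσ0 hσeq
    set σ : ℝ := (c*w).re with hσ
    set z : ℂ := (1:ℂ)/2 + c*w with hzdef
    have hzre' : z.re = 1/2 + σ := by
      rw [hzdef, Complex.add_re, hσ]
      congr 1
      norm_num
    have hzim' : |z.im| = σ := by
      rw [hzdef, Complex.add_im, show ((1:ℂ)/2).im = 0 from by norm_num, zero_add]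
      exact hσeq
    have hsin := ray_sin_lower hσ0 hzre' hzim'
    have hepos := Real.exp_pos (Real.pi * σ)
    have hsinpos : 0 < ‖(Complex.sin ((Real.pi:ℂ) * z))‖ := by nlinarith
    have hsne : Complex.sin ((Real.pi:ℂ) * z) ≠ 0 := by
      intro h
      rw [h] at hsinpos
      simp at hsinpos
    have hΦw : Φ w = f z / Complex.sin ((Real.pi:ℂ) * z) *
        Complex.exp (((a+1 : ℝ) : ℂ) * (c*w)) := by
      rw [hΦdef]
      simp only []
      rw [carlsonF_eq f hzero hsne]
    rw [hΦw, norm_mul, norm_div]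
    have hexpnorm : ‖Complex.exp (((a+1 : ℝ) : ℂ) * (c*w))‖ = Real.exp ((a+1)*σ) := by
      rw [Complex.norm_exp, Complex.re_ofReal_mul]
    rw [hexpnorm]
    have hfz := H z (by linarith)
    rw [hzre', hzim'] at hfz
    have hSnorm : ‖Complex.sin ((Real.pi:ℂ) * z)‖ = ‖(Complex.sin ((Real.pi:ℂ) * z))‖ :=
      rfl
    rw [div_mul_eq_mul_div, hSnorm, div_le_iff₀ hsinpos]
    have hstep1 : ‖f z‖ * Real.exp ((a+1)*σ) ≤
        C * Real.exp (-a * (1/2 + σ) + Real.pi/2 * σ + (a+1)*σ) := by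
      rw [Real.exp_add]
      calc ‖f z‖ * Real.exp ((a+1)*σ)
          ≤ (C * Real.exp (-a * (1/2 + σ) + Real.pi/2 * σ)) * Real.exp ((a+1)*σ) :=
            mul_le_mul_of_nonneg_right hfz (Real.exp_pos _).le
        _ = C * (Real.exp (-a * (1/2 + σ) + Real.pi/2 * σ) * Real.exp ((a+1)*σ)) := by ring
    have hstep2 : C * Real.exp (-a * (1/2 + σ) + Real.pi/2 * σ + (a+1)*σ) ≤
        C * Real.exp (-a/2 + Real.pi * σ) := by
      apply mul_le_mul_of_nonneg_left _ hC.le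
      apply Real.exp_le_exp.mpr
      nlinarith [Real.pi_gt_three]
    have hstep3 : C * Real.exp (-a/2 + Real.pi * σ) ≤
        4 * C * Real.exp (-a/2) * ‖(Complex.sin ((Real.pi:ℂ) * z))‖ := by
      rw [Real.exp_add]
      calc C * (Real.exp (-a/2) * Real.exp (Real.pi * σ))
          ≤ C * (Real.exp (-a/2) * (4 * ‖(Complex.sin ((Real.pi:ℂ) * z))‖)) := by
            apply mul_le_mul_of_nonneg_left _ hC.le
            exact mul_le_mul_of_nonneg_left hsin (Real.exp_pos _).le
        _ = 4 * C * Real.exp (-a/2) * ‖(Complex.sin ((Real.pi:ℂ) * z))‖ := by ring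
    linarith
  -- differentiability
  have hΦdiff : ∀ w : ℂ, 0 < ((1:ℂ)/2 + c*w).re → DifferentiableAt ℂ Φ w := by
    intro w hw
    apply DifferentiableAt.mul
    · exact (carlsonF_differentiableAt f hf hzero hw).comp w
        ((differentiableAt_const _).add ((differentiableAt_id).const_mul c))
    · exact ((differentiableAt_id.const_mul c).const_mul _).cexp
  have hd : DiffContOnCl ℂ Φ (Set.Ioi 0 ×ℂ Set.Ioi 0) := by
    constructor
    · intro w hw
      rw [Complex.mem_reProdIm] at hw
      have h1 : (0:ℝ) < w.re := hw.1
      have h2 : (0:ℝ) < w.im := hw.2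
      exact (hΦdiff w (by rw [hzre w]; nlinarith)).differentiableWithinAt
    · intro w hw
      rw [Complex.closure_reProdIm, closure_Ioi, Complex.mem_reProdIm] at hw
      have h1 : (0:ℝ) ≤ w.re := hw.1
      have h2 : (0:ℝ) ≤ w.im := hw.2
      exact (hΦdiff w (by rw [hzre w]; nlinarith)).continuousAt.continuousWithinAt
  -- growth
  have hB : ∃ c' < (2:ℝ), ∃ B, Φ =O[Bornology.cobounded ℂ ⊓
      Filter.principal (Set.Ioi 0 ×ℂ Set.Ioi 0)]
      fun w => Real.exp (B * ‖w‖ ^ c') := by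
    refine ⟨1, one_lt_two, 1 + |a+1|, Asymptotics.IsBigO.of_bound (2 * Real.exp (3/2)) ?_⟩
    rw [Filter.eventually_inf_principal]
    apply Filter.Eventually.of_forall
    intro w hw
    rw [Complex.mem_reProdIm] at hw
    have h1 : (0:ℝ) < w.re := hw.1
    have h2 : (0:ℝ) < w.im := hw.2
    have hz12 : (1:ℝ)/2 ≤ ((1:ℂ)/2 + c*w).re := by rw [hzre w]; nlinarith
    have hgb := carlsonF_growth f hf hzero hgrowth hz12
    have hznorm : ‖(1:ℂ)/2 + c*w‖ ≤ 1/2 + ‖w‖ := by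
      calc ‖(1:ℂ)/2 + c*w‖ ≤ ‖(1:ℂ)/2‖ + ‖c*w‖ := norm_add_le _ _
        _ = 1/2 + ‖w‖ := by
            rw [norm_mul, hcabs, one_mul]
            norm_num
    have hexpnorm : ‖Complex.exp (((a+1 : ℝ) : ℂ) * (c*w))‖ = Real.exp ((a+1)*(c*w).re) := by
      rw [Complex.norm_exp, Complex.re_ofReal_mul]
    have hre_le : (a+1)*(c*w).re ≤ |a+1| * ‖w‖ := by
      calc (a+1)*(c*w).re ≤ |(a+1)*(c*w).re| := le_abs_self _
        _ = |a+1| * |(c*w).re| := abs_mul _ _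
        _ ≤ |a+1| * ‖c*w‖ := by
            apply mul_le_mul_of_nonneg_left _ (abs_nonneg _)
            exact Complex.abs_re_le_norm _
        _ = |a+1| * ‖w‖ := by rw [norm_mul, hcabs, one_mul]
    rw [hΦdef]
    simp only []
    rw [norm_mul, hexpnorm]
    have hfinal : ‖carlsonF f ((1:ℂ)/2 + c*w)‖ * Real.exp ((a+1)*(c*w).re) ≤
        2 * Real.exp (3/2) * Real.exp ((1 + |a+1|) * ‖w‖) := by
      calc ‖carlsonF f ((1:ℂ)/2 + c*w)‖ * Real.exp ((a+1)*(c*w).re)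
          ≤ (2 * Real.exp (‖(1:ℂ)/2 + c*w‖ + 1)) * Real.exp (|a+1| * ‖w‖) := by
            apply mul_le_mul hgb (Real.exp_le_exp.mpr hre_le) (Real.exp_pos _).le
            positivity
        _ ≤ (2 * Real.exp (1/2 + ‖w‖ + 1)) * Real.exp (|a+1| * ‖w‖) := by
            apply mul_le_mul_of_nonneg_right _ (Real.exp_pos _).le
            have := Real.exp_le_exp.mpr (by linarith : ‖(1:ℂ)/2 + c*w‖ + 1 ≤ 1/2 + ‖w‖ + 1)
            linarith
        _ = 2 * Real.exp (3/2) * Real.exp ((1 + |a+1|) * ‖w‖) := by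
            rw [mul_assoc, ← Real.exp_add, mul_assoc, ← Real.exp_add]
            congr 2
            ring
    calc ‖carlsonF f ((1:ℂ)/2 + c*w)‖ * Real.exp ((a+1)*(c*w).re)
        ≤ 2 * Real.exp (3/2) * Real.exp ((1 + |a+1|) * ‖w‖) := hfinal
      _ ≤ 2 * Real.exp (3/2) * ‖Real.exp ((1 + |a+1|) * ‖w‖ ^ (1:ℝ))‖ := by
          rw [Real.norm_eq_abs, Real.abs_exp, Real.rpow_one]
  -- apply quadrant PL
  have hΦle : ∀ w : ℂ, 0 ≤ w.re → 0 ≤ w.im → ‖Φ w‖ ≤ 4 * C * Real.exp (-a/2) := by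
    intro w hwre hwim
    apply PhragmenLindelof.quadrant_I hd hB _ _ hwre hwim
    · intro x hx
      apply hray
      · rw [hcre]
        simp only [Complex.ofReal_re, Complex.ofReal_im, add_zero]
        exact mul_nonneg htpos.le hx
      · rw [hcre, hcim]
        simp only [Complex.ofReal_re, Complex.ofReal_im, add_zero, zero_sub]
        rw [abs_mul, _root_.abs_of_nonneg htpos.le, abs_neg, _root_.abs_of_nonneg hx]
    · intro x hx
      apply hray
      · rw [hcre]
        simp only [Complex.mul_re, Complex.mul_im, Complex.ofReal_re, Complex.ofReal_im,
          Complex.I_re, Complex.I_im, mul_zero, mul_one, zero_mul, add_zero, zero_add,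
          sub_zero, zero_sub]
        exact mul_nonneg htpos.le hx
      · rw [hcre, hcim]
        simp only [Complex.mul_re, Complex.mul_im, Complex.ofReal_re, Complex.ofReal_im,
          Complex.I_re, Complex.I_im, mul_zero, mul_one, zero_mul, add_zero, zero_add,
          sub_zero, zero_sub]
        rw [abs_mul, _root_.abs_of_nonneg htpos.le, _root_.abs_of_nonneg hx]
  -- extract the bound on the real axis
  intro x hx
  set w₀ : ℂ := ((x : ℂ) - 1/2) * ((t:ℂ) + (t:ℂ)*Complex.I) with hw₀
  have hprod : c * ((t:ℂ) + (t:ℂ)*Complex.I) = 1 := by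
    apply Complex.ext
    · rw [Complex.mul_re, hccre, hccim]
      simp only [Complex.add_re, Complex.add_im, Complex.ofReal_re, Complex.ofReal_im,
        Complex.mul_re, Complex.mul_im, Complex.I_re, Complex.I_im, Complex.one_re]
      ring_nf
      nlinarith
    · rw [Complex.mul_im, hccre, hccim]
      simp only [Complex.add_re, Complex.add_im, Complex.ofReal_re, Complex.ofReal_im,
        Complex.mul_re, Complex.mul_im, Complex.I_re, Complex.I_im, Complex.one_im]
      ring
  have hcw₀ : c * w₀ = (x : ℂ) - 1/2 := by
    rw [hw₀]
    calc c * (((x : ℂ) - 1/2) * ((t:ℂ) + (t:ℂ)*Complex.I))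
        = (c * ((t:ℂ) + (t:ℂ)*Complex.I)) * ((x : ℂ) - 1/2) := by ring
      _ = (x : ℂ) - 1/2 := by rw [hprod, one_mul]
  have hw₀re : 0 ≤ w₀.re := by
    rw [hw₀, Complex.mul_re]
    simp only [Complex.sub_re, Complex.sub_im, Complex.ofReal_re, Complex.ofReal_im,
      Complex.add_re, Complex.add_im, Complex.mul_re, Complex.mul_im, Complex.I_re, Complex.I_im]
    norm_num
    nlinarith
  have hw₀im : 0 ≤ w₀.im := by
    rw [hw₀, Complex.mul_im]
    simp only [Complex.sub_re, Complex.sub_im, Complex.ofReal_re, Complex.ofReal_im,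
      Complex.add_re, Complex.add_im, Complex.mul_re, Complex.mul_im, Complex.I_re, Complex.I_im]
    norm_num
    nlinarith
  have hkey := hΦle w₀ hw₀re hw₀im
  have hΦw₀ : Φ w₀ = carlsonF f (x : ℂ) * Complex.exp (((a+1:ℝ):ℂ) * ((x:ℂ) - 1/2)) := by
    have harg : (1:ℂ)/2 + ((x:ℂ) - 1/2) = (x:ℂ) := by ring
    rw [hΦdef]
    simp only []
    rw [hcw₀, harg]
  rw [hΦw₀, norm_mul] at hkey
  have hexpn : ‖Complex.exp (((a+1:ℝ):ℂ) * ((x:ℂ) - 1/2))‖ = Real.exp ((a+1) * (x - 1/2)) := by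
    rw [Complex.norm_exp]
    congr 1
    rw [Complex.re_ofReal_mul]
    congr 1
    simp
  rw [hexpn] at hkey
  -- carlsonF bound implies f bound
  have hcar : ‖f (x:ℂ)‖ ≤ ‖carlsonF f (x:ℂ)‖ := by
    by_cases hsx : Complex.sin ((Real.pi:ℂ) * (x:ℂ)) = 0
    · obtain ⟨k, hk⟩ := eq_int_of_sin_pi_eq_zero hsx
      have hxk : x = (k : ℝ) := by exact_mod_cast hk
      have hk1 : 1 ≤ k := by
        have h05 : (1:ℝ)/2 ≤ (k:ℝ) := hxk ▸ hx
        by_contra hcon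
        push_neg at hcon
        have hk0 : k ≤ 0 := by omega
        have : (k:ℝ) ≤ 0 := by exact_mod_cast hk0
        linarith
      have : f (x:ℂ) = 0 := by rw [hk]; exact hzero k hk1
      rw [this]
      simp
    · rw [carlsonF_eq f hzero hsx, norm_div]
      have hsle : ‖Complex.sin ((Real.pi:ℂ) * (x:ℂ))‖ ≤ 1 := by
        have : (Real.pi:ℂ) * (x:ℂ) = ((Real.pi * x : ℝ) : ℂ) := by push_cast; ring
        rw [this, ← Complex.ofReal_sin, Complex.norm_real, Real.norm_eq_abs]
        exact abs_le.mpr ⟨Real.neg_one_le_sin _, Real.sin_le_one _⟩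
      have hspos : 0 < ‖Complex.sin ((Real.pi:ℂ) * (x:ℂ))‖ := by
        rw [norm_pos_iff]; exact hsx
      rw [le_div_iff₀ hspos]
      calc ‖f (x:ℂ)‖ * ‖Complex.sin ((Real.pi:ℂ) * (x:ℂ))‖
          ≤ ‖f (x:ℂ)‖ * 1 := mul_le_mul_of_nonneg_left hsle (norm_nonneg _)
        _ = ‖f (x:ℂ)‖ := mul_one _
  have hE := Real.exp_pos ((a+1)*(x-1/2))
  have hcarbound : ‖carlsonF f (x:ℂ)‖ ≤
      (4*C*Real.exp (-a/2)) * Real.exp (-((a+1)*(x-1/2))) := by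
    rw [← le_div_iff₀ hE] at hkey
    calc ‖carlsonF f (x:ℂ)‖ ≤ 4*C*Real.exp (-a/2) / Real.exp ((a+1)*(x-1/2)) := hkey
      _ = (4*C*Real.exp (-a/2)) * Real.exp (-((a+1)*(x-1/2))) := by
          rw [Real.exp_neg]
          ring
  calc ‖f (x:ℂ)‖ ≤ ‖carlsonF f (x:ℂ)‖ := hcar
    _ ≤ (4*C*Real.exp (-a/2)) * Real.exp (-((a+1)*(x-1/2))) := hcarbound
    _ = 4 * C * Real.exp (1/2) * Real.exp (-(a+1)*x) := by
        have hexp1 : -a/2 + -((a+1)*(x-1/2)) = 1/2 + -(a+1)*x := by ring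
        rw [mul_assoc, ← Real.exp_add, hexp1, Real.exp_add, ← mul_assoc]

lemma carlson_induction (f : ℂ → ℂ) (hf : Differentiable ℂ f)
    (hzero : ∀ m : ℤ, 1 ≤ m → f m = 0)
    (hgrowth : ∀ z : ℂ, ‖f z‖ ≤ Real.exp ‖z‖)
    (hgrowth_im : ∀ y : ℝ, ‖f (Complex.I * y)‖ ≤ Real.exp ((Real.pi / 2) * |y|)) :
    ∀ n : ℕ, ∀ z : ℂ, 0 ≤ z.re →
      ‖f z‖ ≤ Real.exp (5*(n:ℝ)+5) *
        Real.exp (-((n:ℝ) - 1) * z.re + (Real.pi/2) * |z.im|) := by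
  intro n
  induction n with
  | zero =>
    have hre : ∀ x : ℝ, 0 ≤ x → ‖f x‖ ≤ Real.exp (5*(0:ℝ)+5) * Real.exp (-(-1) * x) := by
      intro x hx
      have h1 : ‖f x‖ ≤ Real.exp ‖(x:ℂ)‖ := hgrowth _
      have h2 : ‖(x:ℂ)‖ = x := by
        rw [Complex.norm_real, Real.norm_eq_abs, _root_.abs_of_nonneg hx]
      rw [h2] at h1
      have h3 : (1:ℝ) ≤ Real.exp (5*(0:ℝ)+5) := Real.one_le_exp (by norm_num)
      have h4 : Real.exp x = Real.exp (-(-1) * x) := by norm_num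
      nlinarith [Real.exp_pos x]
    have h := quad_bound f hf hgrowth hgrowth_im (-1) (Real.exp (5*(0:ℝ)+5))
      (Real.one_le_exp (by norm_num)) hre
    intro z hz
    have h5 := h z hz
    have h6 : -((0:ℕ):ℝ) + 1 = -(-1 : ℝ) := by norm_num
    calc ‖f z‖ ≤ Real.exp (5*(0:ℝ)+5) * Real.exp (-(-1) * z.re + Real.pi/2 * |z.im|) := h5
      _ = Real.exp (5*((0:ℕ):ℝ)+5) *
          Real.exp (-(((0:ℕ):ℝ) - 1) * z.re + Real.pi/2 * |z.im|) := by
          norm_num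
  | succ n ih =>
    have hstep := sector_step f hf hzero hgrowth ((n:ℝ)-1) (Real.exp (5*(n:ℝ)+5))
      (Real.exp_pos _) ih
    have hre : ∀ x : ℝ, 0 ≤ x →
        ‖f x‖ ≤ Real.exp (5*((n:ℝ)+1)+5) * Real.exp (-(n:ℝ) * x) := by
      intro x hx
      rcases le_or_gt (1/2) x with hx2 | hx2
      · have h1 := hstep x hx2
        have h2 : -(((n:ℝ)-1)+1) * x = -(n:ℝ) * x := by ring
        rw [h2] at h1
        have h3 : 4 * Real.exp (5*(n:ℝ)+5) * Real.exp (1/2) ≤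
            Real.exp (5*((n:ℝ)+1)+5) := by
          have h4 : (4:ℝ) ≤ Real.exp (9/2) := by
            have := Real.add_one_le_exp (9/2)
            linarith
          calc 4 * Real.exp (5*(n:ℝ)+5) * Real.exp (1/2)
              ≤ Real.exp (9/2) * Real.exp (5*(n:ℝ)+5) * Real.exp (1/2) := by
                apply mul_le_mul_of_nonneg_right _ (Real.exp_pos _).le
                exact mul_le_mul_of_nonneg_right h4 (Real.exp_pos _).le
            _ = Real.exp (9/2 + (5*(n:ℝ)+5) + 1/2) := by
                rw [← Real.exp_add, ← Real.exp_add]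
            _ = Real.exp (5*((n:ℝ)+1)+5) := by ring_nf
        calc ‖f x‖ ≤ 4 * Real.exp (5*(n:ℝ)+5) * Real.exp (1/2) * Real.exp (-(n:ℝ) * x) := h1
          _ ≤ Real.exp (5*((n:ℝ)+1)+5) * Real.exp (-(n:ℝ) * x) :=
              mul_le_mul_of_nonneg_right h3 (Real.exp_pos _).le
      · have h1 : ‖f x‖ ≤ Real.exp ‖(x:ℂ)‖ := hgrowth _
        have h2 : ‖(x:ℂ)‖ = x := by
          rw [Complex.norm_real, Real.norm_eq_abs, _root_.abs_of_nonneg hx]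
        rw [h2] at h1
        have h3 : Real.exp x ≤ Real.exp (5*((n:ℝ)+1)+5) * Real.exp (-(n:ℝ) * x) := by
          rw [← Real.exp_add, Real.exp_le_exp]
          have hn0 : (0:ℝ) ≤ (n:ℝ) := Nat.cast_nonneg n
          nlinarith
        linarith
    have h := quad_bound f hf hgrowth hgrowth_im (n:ℝ) (Real.exp (5*((n:ℝ)+1)+5))
      (Real.one_le_exp (by positivity)) hre
    intro z hz
    have h5 := h z hz
    have h6 : (((n+1:ℕ)):ℝ) = (n:ℝ) + 1 := by push_cast; ring
    rw [h6]
    have h7 : -((n:ℝ) + 1 - 1) * z.re = -(n:ℝ) * z.re := by ring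
    rw [h7]
    exact h5

theorem carlson_corollary_half (f : ℂ → ℂ) (hf : Differentiable ℂ f)
    (hzero : ∀ n : ℕ, 1 ≤ n → f n = 0)
    (hgrowth : ∀ z : ℂ, ‖f z‖ ≤ Real.exp ‖z‖)
    (hgrowth_im : ∀ y : ℝ, ‖f (Complex.I * y)‖ ≤ Real.exp ((Real.pi / 2) * |y|)) :
    f (1 / 2) = 0 := by
  have hzero' : ∀ m : ℤ, 1 ≤ m → f m = 0 := by
    intro m hm
    have h1 : ((m.toNat : ℕ) : ℂ) = (m : ℂ) := by
      have := Int.toNat_of_nonneg (by omega : (0:ℤ) ≤ m)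
      exact_mod_cast congrArg (fun k : ℤ => (k : ℂ)) this
    rw [← h1]
    exact hzero m.toNat (by omega)
  have hind := carlson_induction f hf hzero' hgrowth hgrowth_im
  -- f vanishes on ball(10,1)
  have hzero_ball : ∀ z : ℂ, z ∈ Metric.ball (10:ℂ) 1 → f z = 0 := by
    intro z hz
    rw [Metric.mem_ball, Complex.dist_eq] at hz
    have hre9 : 9 ≤ z.re := by
      have h1 : |(z - 10).re| ≤ ‖(z - 10)‖ := Complex.abs_re_le_norm _
      have h2 : (z - 10).re = z.re - 10 := by simp
      rw [h2, abs_le] at h1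
      linarith
    have him1 : |z.im| ≤ 1 := by
      have h1 : |(z - 10).im| ≤ ‖(z - 10)‖ := Complex.abs_im_le_norm _
      have h2 : (z - 10).im = z.im := by simp
      rw [h2] at h1
      linarith
    have hbound : ∀ n : ℕ, ‖f z‖ ≤ Real.exp 12 * Real.exp (-4) ^ n := by
      intro n
      have h1 := hind (n+1) z (by linarith)
      have h2 : Real.exp (5*((n+1:ℕ):ℝ)+5) *
          Real.exp (-(((n+1:ℕ):ℝ) - 1) * z.re + (Real.pi/2) * |z.im|) ≤
          Real.exp 12 * Real.exp (-4) ^ n := by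
        rw [← Real.exp_add, ← Real.exp_nat_mul, ← Real.exp_add, Real.exp_le_exp]
        push_cast
        have hπ : Real.pi ≤ 4 := by nlinarith [Real.pi_lt_d2]
        have him2 : (Real.pi/2) * |z.im| ≤ 2 := by
          have := abs_nonneg z.im
          nlinarith
        have hre2 : -((n:ℝ) + 1 - 1) * z.re ≤ -(n:ℝ) * 9 := by
          have hn0 : (0:ℝ) ≤ (n:ℝ) := Nat.cast_nonneg n
          nlinarith
        nlinarith [Nat.cast_nonneg (α := ℝ) n]
      exact h1.trans h2
    have htend : Filter.Tendsto (fun n : ℕ => Real.exp 12 * Real.exp (-4) ^ n)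
        Filter.atTop (nhds 0) := by
      have h1 : |Real.exp (-4)| < 1 := by
        rw [_root_.abs_of_nonneg (Real.exp_pos _).le]
        exact Real.exp_lt_one_iff.mpr (by norm_num)
      have h2 := tendsto_pow_atTop_nhds_zero_of_abs_lt_one h1
      have h3 := h2.const_mul (Real.exp 12)
      simpa using h3
    have hle : ‖f z‖ ≤ 0 := ge_of_tendsto htend (Filter.Eventually.of_forall hbound)
    exact norm_le_zero_iff.mp hle
  have hana : AnalyticOnNhd ℂ f Set.univ := fun z _ => hf.analyticAt z
  have heq : Set.EqOn f 0 Set.univ := by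
    apply hana.eqOn_zero_of_preconnected_of_eventuallyEq_zero isPreconnected_univ
      (Set.mem_univ (10:ℂ))
    filter_upwards [Metric.ball_mem_nhds (10:ℂ) one_pos] with z hz using hzero_ball z hz
  exact heq (Set.mem_univ _)
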